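/- Let G_h be a directed graph on n vertices and let the DET-STRAT instance assign every vertex deadline d(v)=n with all arcs of unit weight. Then any feasible cyclic patrolling sequence of the DET-STRAT instance must visit each vertex exactly once per cycle (i.e., each vertex appears exactly once in σ(1),…,σ(s−1)), and hence corresponds to a directed Hamiltonian circuit of G_h. -/

import Mathlib

/-! With unit weights the deadline condition says that every vertex recurs within `n` turns after
any time `k`; applying it one period later turns the window `(k, k + n]` into `[k, k + n)`. A window
of `n` consecutive turns meeting all `n` vertices is injective by counting, so every vertex occurs
in it exactly once. -/

def Wsum {V : Type*} (w : V → V → ℕ) (σ : ℕ → V) (k m : ℕ) : ℕ :=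
  ∑ j ∈ Finset.Ico k m, w (σ j) (σ (j + 1))

def Feasible {V : Type*} (a : V → V → Prop) (w : V → V → ℕ) (d : V → ℕ)
    (σ : ℕ → V) (p : ℕ) : Prop :=
  0 < p ∧ (∀ k, σ (k + p) = σ k) ∧ (∀ k, a (σ k) (σ (k + 1))) ∧
    (∀ t : V, ∃ k < p, σ k = t) ∧
    (∀ t : V, ∀ k, ∃ m, k < m ∧ σ m = t ∧ Wsum w σ k m ≤ d t)

theorem Wsum_one {V : Type*} (σ : ℕ → V) (k m : ℕ) : Wsum (fun _ _ => 1) σ k m = m - k := by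
  simp [Wsum]

theorem Feasible.exists_mem_window {V : Type*} {a : V → V → Prop} {d : V → ℕ} {σ : ℕ → V}
    {p : ℕ} (h : Feasible a (fun _ _ => 1) d σ p) (t : V) (k : ℕ) :
    ∃ m, k ≤ m ∧ m < k + d t ∧ σ m = t := by
  obtain ⟨hp, hper, -, -, hdead⟩ := h
  obtain ⟨m, hlt, hσm, hle⟩ := hdead t (k + p - 1)
  rw [Wsum_one] at hle
  refine ⟨m - p, by omega, by omega, ?_⟩
  rw [← hper, Nat.sub_add_cancel (by omega), hσm]

theorem existsUnique_mem_window_of_forall_exists {V : Type*} [Fintype V] {σ : ℕ → V} {k : ℕ}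
    (hcover : ∀ v, ∃ m, k ≤ m ∧ m < k + Fintype.card V ∧ σ m = v) (v : V) :
    ∃! m, k ≤ m ∧ m < k + Fintype.card V ∧ σ m = v := by
  have hinj : Set.InjOn σ (Finset.Ico k (k + Fintype.card V)) := by
    refine Finset.injOn_of_surjOn_of_card_le (t := Finset.univ) σ (fun _ _ => by simp)
      (fun v _ => ?_) (by simp)
    obtain ⟨m, hkm, hmk, hσm⟩ := hcover v
    exact ⟨m, by simp [hkm, hmk], hσm⟩
  obtain ⟨m, hkm, hmk, hσm⟩ := hcover v
  refine ⟨m, ⟨hkm, hmk, hσm⟩, fun m' ⟨hkm', hmk', hσm'⟩ => hinj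
    (by simp [hkm', hmk']) (by simp [hkm, hmk]) (hσm'.trans hσm.symm)⟩

/-- In the DET-STRAT instance built from a directed graph on `n` vertices with all
deadlines equal to `n` and unit arc weights, any feasible cyclic patrolling sequence
visits each vertex exactly once per cycle: every vertex occurs exactly once in every
window of `n` consecutive turns, and in particular exactly once in `σ(0),…,σ(n−1)`,
so the sequence corresponds to a directed Hamiltonian circuit of the graph. -/
theorem detStrat_feasible_is_hamiltonian {V : Type*} [Fintype V]
    (A : V → V → Prop) (σ : ℕ → V) (p : ℕ)
    (h : Feasible A (fun _ _ => 1) (fun _ => Fintype.card V) σ p) :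
    (∀ (v : V) (k : ℕ), ∃! m, k ≤ m ∧ m < k + Fintype.card V ∧ σ m = v) ∧
      (∀ v : V, ∃! j, j < Fintype.card V ∧ σ j = v) := by
  have hwindow : ∀ (v : V) (k : ℕ), ∃! m, k ≤ m ∧ m < k + Fintype.card V ∧ σ m = v :=
    fun v k => existsUnique_mem_window_of_forall_exists (fun t => h.exists_mem_window t k) v
  exact ⟨hwindow, fun v => by simpa using hwindow v 0⟩
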